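/- (Normalization lemma) Let C be a cost function with the ASI property with rank function rank, and let A, B be elements with precedence constraint A → B and rank(A) ≥ rank(B). If there exists an optimal (cost-minimal, precedence-respecting) sequence, then there exists an optimal sequence in which B immediately follows A. -/

import Mathlib

/-!
Take an optimal sequence `l₁ ++ a :: V ++ b :: l₂`. If `V` is empty we are done. Otherwise
either `rank V ≤ rank [a]`, and moving `a` past `V` does not increase the cost, or
`rank [b] ≤ rank [a] < rank V`, and moving `b` in front of `V` does not increase the cost.
Either interchange keeps `a` before `b`, so the new sequence is valid, hence optimal, and in it
`b` immediately follows `a`.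
-/

section Optimal

variable {α : Type*} (C : List α → ℝ) (P : List α → Prop)

def IsOptimal (S : List α) : Prop := P S ∧ ∀ S', P S' → C S ≤ C S'

variable {C P}

theorem IsOptimal.of_le {S T : List α} (hS : IsOptimal C P S) (hT : P T) (h : C T ≤ C S) :
    IsOptimal C P T :=
  ⟨hT, fun S' hS' => h.trans (hS.2 S' hS')⟩

theorem IsOptimal.swap_of_rank_le {rank : List α → ℝ}
    (asi : ∀ (A B U V : List α), U ≠ [] → V ≠ [] →
      P (A ++ U ++ V ++ B) → P (A ++ V ++ U ++ B) →
      (C (A ++ U ++ V ++ B) ≤ C (A ++ V ++ U ++ B) ↔ rank U ≤ rank V))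
    {X U V Y : List α} (hU : U ≠ []) (hV : V ≠ [])
    (hS : IsOptimal C P (X ++ U ++ V ++ Y)) (hT : P (X ++ V ++ U ++ Y))
    (hr : rank V ≤ rank U) : IsOptimal C P (X ++ V ++ U ++ Y) :=
  hS.of_le hT ((asi X Y V U hV hU hT hS.1).2 hr)

end Optimal

/-- Normalization lemma. `P S` means the sequence `S` respects the precedence
constraints; the precedence constraint `a → b` is encoded by `hprec` (in every
valid sequence `a` occurs strictly before `b`), and `hswap` states that an
adjacent interchange of segments preserves validity as long as `a` still
precedes `b`. `C` has the ASI property with rank function `rank` and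
`rank [a] ≥ rank [b]`. If an optimal (cost-minimal, precedence-respecting)
sequence exists, then there is an optimal sequence in which `b` immediately
follows `a`. -/
theorem normalization_lemma {α : Type*} (C : List α → ℝ) (rank : List α → ℝ)
    (P : List α → Prop) (a b : α)
    (asi : ∀ (A B U V : List α), U ≠ [] → V ≠ [] →
      P (A ++ U ++ V ++ B) → P (A ++ V ++ U ++ B) →
      (C (A ++ U ++ V ++ B) ≤ C (A ++ V ++ U ++ B) ↔ rank U ≤ rank V))
    (hprec : ∀ S, P S → ∃ l₁ l₂ : List α, S = l₁ ++ a :: l₂ ∧ b ∈ l₂)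
    (hswap : ∀ (X U V Y : List α), P (X ++ U ++ V ++ Y) →
      (∃ l₁ l₂ : List α, X ++ V ++ U ++ Y = l₁ ++ a :: l₂ ∧ b ∈ l₂) →
      P (X ++ V ++ U ++ Y))
    (hrank : rank [b] ≤ rank [a])
    (hopt : ∃ S, P S ∧ ∀ S', P S' → C S ≤ C S') :
    ∃ S, P S ∧ (∀ S', P S' → C S ≤ C S') ∧
      ∃ l₁ l₂ : List α, S = l₁ ++ a :: b :: l₂ := by
  obtain ⟨S, hS⟩ : ∃ S, IsOptimal C P S := hopt
  obtain ⟨l₁, l₂, rfl, hb⟩ := hprec S hS.1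
  obtain ⟨V, l₃, rfl⟩ := List.append_of_mem hb
  rcases eq_or_ne V [] with rfl | hV
  · exact ⟨_, hS.1, hS.2, l₁, l₃, by simp⟩
  by_cases hr : rank V ≤ rank [a]
  · have hS' : IsOptimal C P (l₁ ++ [a] ++ V ++ b :: l₃) := by simpa using hS
    have hT := hswap l₁ [a] V (b :: l₃) hS'.1 ⟨l₁ ++ V, b :: l₃, by simp, by simp⟩
    have hopt' := hS'.swap_of_rank_le asi (by simp) hV hT hr
    exact ⟨_, hopt'.1, hopt'.2, l₁ ++ V, l₃, by simp⟩
  · have hS' : IsOptimal C P (l₁ ++ [a] ++ V ++ [b] ++ l₃) := by simpa using hS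
    have hT := hswap (l₁ ++ [a]) V [b] l₃ hS'.1 ⟨l₁, b :: (V ++ l₃), by simp, by simp⟩
    have hopt' := hS'.swap_of_rank_le asi hV (by simp) hT (hrank.trans (le_of_not_ge hr))
    exact ⟨_, hopt'.1, hopt'.2, l₁, V ++ l₃, by simp⟩
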